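/- Let F and G be weakly measurable maps from Ω to H with G a Bessel mapping with bound B_G, let m ∈ L^∞(Ω, μ) with ‖m‖_∞ > 0, and let M : H → H be a bounded invertible operator satisfying ⟨M f, g⟩ = ∫_Ω m(ω)⟨f, F(ω)⟩⟨G(ω), g⟩ dμ(ω) for all f, g ∈ H (with the integrands integrable). Then F satisfies the lower frame condition: for all f ∈ H, ‖f‖² / (B_G · ‖(M*)⁻¹‖² · ‖m‖_∞²) ≤ ∫_Ω |⟨f, F(ω)⟩|² dμ(ω), where the right-hand side may be infinite. -/

import Mathlib

/-! Put `g = (M*)⁻¹ f`, so that `‖f‖² = ⟨M f, g⟩ = ∫ m ⟨f, F⟩ ⟨G, g⟩ dμ`. Hölder's inequality with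
exponents `(∞, 2, 2)` and the Bessel bound for `G` give
`‖f‖² ≤ ‖m‖_∞ ‖⟨f, F(·)⟩‖₂ √B_G ‖g‖ ≤ ‖m‖_∞ ‖⟨f, F(·)⟩‖₂ √B_G ‖(M*)⁻¹‖ ‖f‖`;
cancelling one factor `‖f‖` and squaring gives the lower frame bound. -/

open MeasureTheory

local notation "⟪" x ", " y "⟫" => @inner ℂ _ _ x y

open scoped InnerProductSpace

section LpNorms

variable {Ω : Type*} [MeasurableSpace Ω] {μ : Measure Ω}

theorem eLpNorm_two_sq {ε : Type*} [ENorm ε] (u : Ω → ε) :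
    eLpNorm u 2 μ ^ 2 = ∫⁻ ω, ‖u ω‖ₑ ^ 2 ∂μ := by
  simpa using eLpNorm_nnreal_pow_eq_lintegral (f := u) (μ := μ) (p := 2) two_ne_zero

theorem memLp_two_of_lintegral_enorm_sq_ne_top {E : Type*} [NormedAddCommGroup E] {u : Ω → E}
    (hu : AEStronglyMeasurable u μ) (h : ∫⁻ ω, ‖u ω‖ₑ ^ 2 ∂μ ≠ ⊤) : MemLp u 2 μ :=
  ⟨hu, by rw [← eLpNorm_two_sq] at h; exact lt_top_iff_ne_top.2 (by simpa using h)⟩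

variable {𝕜 : Type*} [RCLike 𝕜]

theorem enorm_integral_mul_mul_le {u v : Ω → 𝕜} (hu : AEStronglyMeasurable u μ)
    (hv : AEStronglyMeasurable v μ) (m : Ω → 𝕜) :
    ‖∫ ω, m ω * u ω * v ω ∂μ‖ₑ ≤ eLpNorm m ⊤ μ * (eLpNorm u 2 μ * eLpNorm v 2 μ) :=
  calc ‖∫ ω, m ω * u ω * v ω ∂μ‖ₑ ≤ eLpNorm (m • (u * v)) 1 μ := by
        rw [eLpNorm_one_eq_lintegral_enorm]
        simpa [mul_assoc] using enorm_integral_le_lintegral_enorm (μ := μ) (m * u * v)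
    _ ≤ eLpNorm m ⊤ μ * eLpNorm (u * v) 1 μ :=
        eLpNorm_smul_le_eLpNorm_top_mul_eLpNorm 1 (hu.mul hv) m
    _ ≤ eLpNorm m ⊤ μ * (eLpNorm u 2 μ * eLpNorm v 2 μ) := by
        gcongr
        simpa [Pi.mul_def] using
          eLpNorm_le_eLpNorm_mul_eLpNorm_of_nnnorm (p := 2) (q := 2) (r := 1) hu hv (· * ·) 1
            (.of_forall fun _ => by simp [nnnorm_mul])

theorem norm_integral_mul_mul_le {m u v : Ω → 𝕜} (hm : MemLp m ⊤ μ) (hu : MemLp u 2 μ)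
    (hv : MemLp v 2 μ) :
    ‖∫ ω, m ω * u ω * v ω ∂μ‖ ≤
      (eLpNorm m ⊤ μ).toReal * ((eLpNorm u 2 μ).toReal * (eLpNorm v 2 μ).toReal) := by
  simpa using ENNReal.toReal_mono (by finiteness) (enorm_integral_mul_mul_le hu.1 hv.1 m)

end LpNorms

section Bessel

variable {Ω : Type*} [MeasurableSpace Ω] {μ : Measure Ω} {𝕜 : Type*} [RCLike 𝕜]
  {H : Type*} [NormedAddCommGroup H] [InnerProductSpace 𝕜 H] {G : Ω → H} {B : ℝ}

theorem eLpNorm_inner_le_of_bessel (hB : 0 ≤ B)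
    (hG : ∀ f : H, ∫⁻ ω, ‖⟪G ω, f⟫_𝕜‖ₑ ^ 2 ∂μ ≤ ENNReal.ofReal (B * ‖f‖ ^ 2)) (g : H) :
    eLpNorm (fun ω => ⟪g, G ω⟫_𝕜) 2 μ ≤ ENNReal.ofReal (√B * ‖g‖) := by
  have hsq : ENNReal.ofReal (√B * ‖g‖) ^ 2 = ENNReal.ofReal (B * ‖g‖ ^ 2) := by
    rw [← ENNReal.ofReal_pow (by positivity), mul_pow, Real.sq_sqrt hB]
  rw [eLpNorm_congr_norm_ae (.of_forall fun ω => norm_inner_symm g (G ω)),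
    ← ENNReal.pow_le_pow_left_iff two_ne_zero, hsq, eLpNorm_two_sq]
  exact hG g

theorem memLp_two_inner_of_bessel (hG_meas : ∀ f : H, Measurable fun ω => ⟪G ω, f⟫_𝕜)
    (hB : 0 ≤ B) (hG : ∀ f : H, ∫⁻ ω, ‖⟪G ω, f⟫_𝕜‖ₑ ^ 2 ∂μ ≤ ENNReal.ofReal (B * ‖f‖ ^ 2))
    (g : H) : MemLp (fun ω => ⟪g, G ω⟫_𝕜) 2 μ := by
  refine ⟨?_, (eLpNorm_inner_le_of_bessel hB hG g).trans_lt ENNReal.ofReal_lt_top⟩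
  simpa only [Function.comp_def, inner_conj_symm] using
    RCLike.continuous_conj.comp_aestronglyMeasurable (hG_meas g).aestronglyMeasurable

end Bessel

theorem inner_inverse_adjoint_apply_self {𝕜 H : Type*} [RCLike 𝕜] [NormedAddCommGroup H]
    [InnerProductSpace 𝕜 H] [CompleteSpace H] {M : H →L[𝕜] H} (hM : IsUnit M) (f : H) :
    ⟪Ring.inverse (ContinuousLinearMap.adjoint M) f, M f⟫_𝕜 = (‖f‖ : 𝕜) ^ 2 := by
  have hM' : IsUnit (ContinuousLinearMap.adjoint M) := by
    simpa [ContinuousLinearMap.star_eq_adjoint] using hM.star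
  rw [← ContinuousLinearMap.adjoint_inner_left, ← mul_apply_eq_comp,
    Ring.mul_inverse_cancel _ hM', one_apply_eq_self, inner_self_eq_norm_sq_to_K]

theorem div_le_sq_of_sq_le_mul_sqrt {x a b c n : ℝ} (hx : 0 ≤ x) (hb : 0 ≤ b)
    (h : x ^ 2 ≤ c * (a * (√b * (n * x)))) : x ^ 2 / (b * n ^ 2 * c ^ 2) ≤ a ^ 2 := by
  rcases hx.eq_or_lt with rfl | hx
  · simp [sq_nonneg]
  have hle : x ≤ c * a * √b * n := le_of_mul_le_mul_right (by linear_combination h) hx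
  refine div_le_of_le_mul₀ (by positivity) (sq_nonneg a) ?_
  calc x ^ 2 ≤ (c * a * √b * n) ^ 2 := pow_le_pow_left₀ hx.le hle 2
    _ = a ^ 2 * (b * n ^ 2 * c ^ 2) := by rw [mul_pow, mul_pow, mul_pow, Real.sq_sqrt hb]; ring

theorem lower_frame_bound_of_invertible_multiplier_bounded_symbol_general
    {Ω : Type} [MeasurableSpace Ω] (μ : Measure Ω)
    {H : Type} [NormedAddCommGroup H] [InnerProductSpace ℂ H] [CompleteSpace H]
    (F G : Ω → H)
    (hF_meas : ∀ f : H, Measurable fun ω => ⟪F ω, f⟫)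
    (hG_meas : ∀ f : H, Measurable fun ω => ⟪G ω, f⟫)
    (B_G : ℝ) (hBG : 0 < B_G)
    (hG_bessel : ∀ f : H,
      ∫⁻ ω, (‖⟪G ω, f⟫‖₊ : ENNReal) ^ 2 ∂μ ≤ ENNReal.ofReal (B_G * ‖f‖ ^ 2))
    (m : Ω → ℂ) (hm : MemLp m ⊤ μ)
    (M : H →L[ℂ] H) (hM_unit : IsUnit M)
    (hM : ∀ f g : H, ⟪g, M f⟫ = ∫ ω, m ω * ⟪F ω, f⟫ * ⟪g, G ω⟫ ∂μ) :
    ∀ f : H,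
      ENNReal.ofReal
          (‖f‖ ^ 2 /
            (B_G * ‖Ring.inverse (ContinuousLinearMap.adjoint M)‖ ^ 2 *
              (eLpNorm m ⊤ μ).toReal ^ 2))
        ≤ ∫⁻ ω, (‖⟪F ω, f⟫‖₊ : ENNReal) ^ 2 ∂μ := by
  intro f
  set A := ∫⁻ ω, (‖⟪F ω, f⟫‖₊ : ENNReal) ^ 2 ∂μ
  rcases eq_or_ne A ⊤ with hA | hA
  · simp [hA]
  set N := Ring.inverse (ContinuousLinearMap.adjoint M)
  set c := (eLpNorm m ⊤ μ).toReal
  set a := (eLpNorm (fun ω => ⟪F ω, f⟫) 2 μ).toReal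
  have hu : MemLp (fun ω => ⟪F ω, f⟫) 2 μ :=
    memLp_two_of_lintegral_enorm_sq_ne_top (hF_meas f).aestronglyMeasurable hA
  have hv : MemLp (fun ω => ⟪N f, G ω⟫) 2 μ :=
    memLp_two_inner_of_bessel hG_meas hBG.le hG_bessel (N f)
  have key : ‖f‖ ^ 2 ≤ c * (a * (√B_G * (‖N‖ * ‖f‖))) :=
    calc ‖f‖ ^ 2 = ‖⟪N f, M f⟫‖ := by simp [N, inner_inverse_adjoint_apply_self hM_unit]
      _ = ‖∫ ω, m ω * ⟪F ω, f⟫ * ⟪N f, G ω⟫ ∂μ‖ := by rw [hM]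
      _ ≤ c * (a * (eLpNorm (fun ω => ⟪N f, G ω⟫) 2 μ).toReal) :=
          norm_integral_mul_mul_le hm hu hv
      _ ≤ c * (a * (√B_G * ‖N f‖)) := by
          gcongr
          exact ENNReal.toReal_le_of_le_ofReal (by positivity)
            (eLpNorm_inner_le_of_bessel hBG.le hG_bessel (N f))
      _ ≤ c * (a * (√B_G * (‖N‖ * ‖f‖))) := by gcongr; exact N.le_opNorm f
  have ha : a ^ 2 = A.toReal := by
    rw [← ENNReal.toReal_pow, eLpNorm_two_sq]
    rfl
  rw [← ENNReal.ofReal_toReal hA, ← ha]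
  exact ENNReal.ofReal_le_ofReal (div_le_sq_of_sq_le_mul_sqrt (norm_nonneg f) hBG.le key)

/-- If the multiplier `M_{m,F,G}` is bounded and invertible, `G` is Bessel with bound `B_G`
and `m ∈ L^∞(Ω, μ)` with `‖m‖_∞ > 0`, then `F` satisfies the lower frame condition with
bound `1 / (B_G ‖(M*)⁻¹‖² ‖m‖_∞²)`.  Here `(M*)⁻¹` is `Ring.inverse (adjoint M)`, the
right-hand side is a lower Lebesgue integral (it may be infinite), and in Mathlib's
convention the paper's `⟨x, y⟩` is `⟪y, x⟫`. -/
theorem lower_frame_bound_of_invertible_multiplier_bounded_symbol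
    {Ω : Type} [MeasurableSpace Ω] (μ : Measure Ω)
    {H : Type} [NormedAddCommGroup H] [InnerProductSpace ℂ H] [CompleteSpace H]
    (F G : Ω → H)
    (hF_meas : ∀ f : H, Measurable fun ω => ⟪F ω, f⟫)
    (hG_meas : ∀ f : H, Measurable fun ω => ⟪G ω, f⟫)
    (B_G : ℝ) (hBG : 0 < B_G)
    (hG_bessel : ∀ f : H,
      ∫⁻ ω, (‖⟪G ω, f⟫‖₊ : ENNReal) ^ 2 ∂μ ≤ ENNReal.ofReal (B_G * ‖f‖ ^ 2))
    (m : Ω → ℂ) (hm : MemLp m ⊤ μ) (hm_pos : 0 < (eLpNorm m ⊤ μ).toReal)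
    (M : H →L[ℂ] H) (hM_unit : IsUnit M)
    (hM_int : ∀ f g : H, Integrable (fun ω => m ω * ⟪F ω, f⟫ * ⟪g, G ω⟫) μ)
    (hM : ∀ f g : H, ⟪g, M f⟫ = ∫ ω, m ω * ⟪F ω, f⟫ * ⟪g, G ω⟫ ∂μ) :
    ∀ f : H,
      ENNReal.ofReal
          (‖f‖ ^ 2 /
            (B_G * ‖Ring.inverse (ContinuousLinearMap.adjoint M)‖ ^ 2 *
              (eLpNorm m ⊤ μ).toReal ^ 2))
        ≤ ∫⁻ ω, (‖⟪F ω, f⟫‖₊ : ENNReal) ^ 2 ∂μ :=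
  lower_frame_bound_of_invertible_multiplier_bounded_symbol_general μ F G hF_meas hG_meas B_G hBG
    hG_bessel m hm M hM_unit hM
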